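/- The underlying graph of S has at least three leaves; that is, there exist at least three distinct points of S each of which lies on exactly one halving line of S. -/

import Mathlib

/-!
A point `P ∈ S` that some line strictly separates from the rest of `S` is a leaf. Indeed, order
`S \ {P}` by angle around `P`: the number of points on one side of the line `PQ` is then the rank of
`Q` in this order, so it takes each value `0, …, n - 2` exactly once as `Q` runs over `S \ {P}`,
and exactly one `Q` leaves `(n - 2) / 2` points on each side. Such separated points are the
extreme points of the convex hull of `S` (Hahn–Banach), and since `S` is not collinear there are
at least three of them (Krein–Milman).
-/

/-- Planar cross product (signed area determinant) of two vectors in `ℝ × ℝ`. -/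
def det2 (u v : ℝ × ℝ) : ℝ := u.1 * v.2 - u.2 * v.1

/-- Dot product of two vectors in `ℝ × ℝ`. -/
def dot2 (u v : ℝ × ℝ) : ℝ := u.1 * v.1 + u.2 * v.2

/-- A finite set of points of the plane is in general position if no three
distinct points of it are collinear. -/
def GenPos (S : Finset (ℝ × ℝ)) : Prop :=
  ∀ P ∈ S, ∀ Q ∈ S, ∀ R ∈ S, P ≠ Q → P ≠ R → Q ≠ R →
    ¬ Collinear ℝ ({P, Q, R} : Set (ℝ × ℝ))

/-- The line through the two distinct points `P, Q ∈ S` is a halving line of `S`: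
each of the two open half-planes it determines contains exactly
`(S.card - 2) / 2` points of `S`. -/
def IsHalving (S : Finset (ℝ × ℝ)) (P Q : ℝ × ℝ) : Prop :=
  P ∈ S ∧ Q ∈ S ∧ P ≠ Q ∧
  {X ∈ (S : Set (ℝ × ℝ)) | 0 < det2 (Q - P) (X - P)}.ncard = (S.card - 2) / 2 ∧
  {X ∈ (S : Set (ℝ × ℝ)) | det2 (Q - P) (X - P) < 0}.ncard = (S.card - 2) / 2

/-- Degree of a point in the underlying graph of `S`: the number of points `Q`
such that the line `PQ` is a halving line of `S`. -/
noncomputable def hdeg (S : Finset (ℝ × ℝ)) (P : ℝ × ℝ) : ℕ :=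
  {Q : ℝ × ℝ | IsHalving S P Q}.ncard

/-- The number of halving lines of `S`, counted as unordered pairs of points. -/
noncomputable def numHalvingLines (S : Finset (ℝ × ℝ)) : ℕ :=
  {e : Finset (ℝ × ℝ) | ∃ P Q : ℝ × ℝ, e = {P, Q} ∧ IsHalving S P Q}.ncard

/-- The underlying graph of `S`: vertices are the points of `S`, and two points
are adjacent exactly when the line through them is a halving line of `S`. -/
def underlyingGraph (S : Finset (ℝ × ℝ)) : SimpleGraph {x : ℝ × ℝ // x ∈ S} where
  Adj P Q := IsHalving S P.1 Q.1 ∧ IsHalving S Q.1 P.1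
  symm := ⟨fun _ _ h => ⟨h.2, h.1⟩⟩
  loopless := ⟨fun _ h => h.1.2.2.1 rfl⟩

open Finset

namespace Finset

theorem ncard_setOf_mem_and_eq_card_filter_erase {α : Type*} [DecidableEq α]
    {S : Finset α} {p : α → Prop} [DecidablePred p] {a : α} (ha : ¬ p a) :
    {x ∈ (S : Set α) | p x}.ncard = #{x ∈ S.erase a | p x} := by
  rw [filter_erase, erase_eq_of_notMem (by simp [ha]), ← Set.ncard_coe_finset, coe_filter]
  rfl

section LinearOrder

variable {α β : Type*} [LinearOrder β] {T : Finset α} {f : α → β}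

theorem card_filter_lt_add_card_filter_gt (hf : Set.InjOn f T) {Q : α} (hQ : Q ∈ T) :
    #{X ∈ T | f X < f Q} + #{X ∈ T | f Q < f X} + 1 = #T := by
  classical
  have hnot : {X ∈ T | ¬ f X < f Q} = insert Q {X ∈ T | f Q < f X} := by
    ext X
    simp only [mem_filter, mem_insert, not_lt]
    constructor
    · rintro ⟨hX, hle⟩
      rcases hle.lt_or_eq with hlt | heq
      · exact Or.inr ⟨hX, hlt⟩
      · exact Or.inl (hf hX hQ heq.symm)
    · rintro (rfl | ⟨hX, hlt⟩)
      exacts [⟨hQ, le_rfl⟩, ⟨hX, hlt.le⟩]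
  rw [add_assoc, ← card_insert_of_notMem (s := {X ∈ T | f Q < f X}) (a := Q) (by simp), ← hnot,
    card_filter_add_card_filter_not]

theorem existsUnique_card_filter_lt_eq (hf : Set.InjOn f T) {k : ℕ} (hk : k < #T) :
    ∃! Q, Q ∈ T ∧ #{X ∈ T | f X < f Q} = k := by
  classical
  set rank : α → ℕ := fun Q => #{X ∈ T | f X < f Q}
  have rank_lt_rank : ∀ {Q Q'}, Q ∈ T → f Q < f Q' → rank Q < rank Q' := fun hQ hlt =>
    card_lt_card <| (ssubset_iff_of_subset fun X hX => by
      simp only [mem_filter] at hX ⊢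
      exact ⟨hX.1, hX.2.trans hlt⟩).2 ⟨_, mem_filter.2 ⟨hQ, hlt⟩, by simp⟩
  have hinj : Set.InjOn rank T := by
    intro Q hQ Q' hQ' h
    by_contra hne
    rcases (hf.ne_iff hQ hQ').2 hne |>.lt_or_gt with hlt | hlt
    exacts [(rank_lt_rank hQ hlt).ne h, (rank_lt_rank hQ' hlt).ne' h]
  have hmaps : Set.MapsTo rank T (range #T) := fun Q hQ =>
    mem_range.2 <| card_lt_card <| filter_ssubset.2 ⟨Q, hQ, lt_irrefl _⟩
  obtain ⟨Q, hQ, hQk⟩ := surjOn_of_injOn_of_card_le rank hmaps hinj (card_range _).le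
    (mem_range.2 hk)
  exact ⟨Q, ⟨hQ, hQk⟩, fun Q' hQ' => hinj hQ'.1 hQ (hQ'.2.trans hQk.symm)⟩

end LinearOrder

end Finset

theorem collinear_of_subset_affineSpan_pair {k V P : Type*} [DivisionRing k] [AddCommGroup V]
    [Module k V] [AddTorsor V P] {s : Set P} {a b : P} (h : s ⊆ line[k, a, b]) :
    Collinear k s := by
  have := collinear_pair k a b
  rw [Collinear] at this ⊢
  refine le_trans (Submodule.rank_mono ?_) this
  calc vectorSpan k s ≤ line[k, a, b].direction := vectorSpan_mono k h
    _ = vectorSpan k {a, b} := direction_affineSpan k _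

theorem exists_three_mem_extremePoints_convexHull {E : Type*} [NormedAddCommGroup E]
    [NormedSpace ℝ E] {s : Set E} (hs : s.Finite) (hcol : ¬ Collinear ℝ s) :
    ∃ a ∈ (convexHull ℝ s).extremePoints ℝ, ∃ b ∈ (convexHull ℝ s).extremePoints ℝ,
      ∃ c ∈ (convexHull ℝ s).extremePoints ℝ, a ≠ b ∧ a ≠ c ∧ b ≠ c := by
  set A := (convexHull ℝ s).extremePoints ℝ
  by_contra! h
  obtain ⟨a, b, hab⟩ : ∃ a b, A ⊆ {a, b} := by
    rcases A.eq_empty_or_nonempty with hA | ⟨a, ha⟩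
    · exact ⟨0, 0, by simp [hA]⟩
    by_cases hb : ∃ b ∈ A, a ≠ b
    · obtain ⟨b, hb, hab⟩ := hb
      refine ⟨a, b, fun c hc => ?_⟩
      by_contra hc'
      simp only [Set.mem_insert_iff, Set.mem_singleton_iff, not_or] at hc'
      exact hc'.2 (h a ha b hb c hc hab (Ne.symm hc'.1)).symm
    · push Not at hb
      exact ⟨a, a, fun c hc => by simp [← hb c hc]⟩
  refine hcol (collinear_of_subset_affineSpan_pair (a := a) (b := b) ?_)
  calc s ⊆ convexHull ℝ s := subset_convexHull ℝ s
    _ = closure (convexHull ℝ A) :=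
      (closure_convexHull_extremePoints (hs.isCompact_convexHull ℝ) (convex_convexHull ℝ s)).symm
    _ ⊆ closure (convexHull ℝ {a, b}) := closure_mono (convexHull_mono hab)
    _ = convexHull ℝ {a, b} := ((Set.toFinite _).isCompact_convexHull ℝ).isClosed.closure_eq
    _ ⊆ line[ℝ, a, b] := convexHull_subset_affineSpan _

theorem exists_forall_lt_of_mem_extremePoints_convexHull {E : Type*} [NormedAddCommGroup E]
    [NormedSpace ℝ E] {s : Set E} (hs : s.Finite) {x : E}
    (hx : x ∈ (convexHull ℝ s).extremePoints ℝ) :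
    ∃ f : StrongDual ℝ E, ∀ y ∈ s, y ≠ x → f y < f x := by
  have hx' : x ∉ convexHull ℝ (s \ {x}) := fun hmem =>
    (convexHull_min (Set.sdiff_subset_sdiff_left (subset_convexHull ℝ s))
      ((convex_convexHull ℝ s).mem_extremePoints_iff_convex_sdiff.1 hx).2 hmem).2 rfl
  obtain ⟨f, u, hfu, hux⟩ := geometric_hahn_banach_closed_point (convex_convexHull ℝ _)
    (hs.sdiff.isCompact_convexHull ℝ).isClosed hx'
  exact ⟨f, fun y hy hyx => (hfu y (subset_convexHull ℝ _ ⟨hy, hyx⟩)).trans hux⟩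

theorem det2_swap (u v : ℝ × ℝ) : det2 v u = -det2 u v := by
  unfold det2; ring

theorem det2_pos_iff_div_lt {v a b : ℝ × ℝ} (ha : 0 < dot2 v a) (hb : 0 < dot2 v b) :
    0 < det2 a b ↔ det2 v a / dot2 v a < det2 v b / dot2 v b := by
  have hv : 0 < dot2 v v := by
    have : v.1 ≠ 0 ∨ v.2 ≠ 0 := by
      by_contra!
      simp_all [dot2]
    unfold dot2
    rcases this with h | h
    · nlinarith [mul_self_pos.2 h, mul_self_nonneg v.2]
    · nlinarith [mul_self_pos.2 h, mul_self_nonneg v.1]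
  have key : det2 a b * dot2 v v = det2 v b * dot2 v a - det2 v a * dot2 v b := by
    unfold det2 dot2; ring
  rw [div_lt_div_iff₀ ha hb, ← mul_pos_iff_of_pos_right hv, key, sub_pos]

theorem exists_eq_smul_of_det2_eq_zero {u w : ℝ × ℝ} (hu : u ≠ 0) (h : det2 u w = 0) :
    ∃ r : ℝ, w = r • u := by
  unfold det2 at h
  by_cases h1 : u.1 = 0
  · have h2 : u.2 ≠ 0 := fun h2 => hu (Prod.ext h1 h2)
    refine ⟨w.2 / u.2, Prod.ext ?_ ?_⟩
    · simp_all
    · simp [h2]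
  · refine ⟨w.1 / u.1, Prod.ext ?_ ?_⟩
    · simp [h1]
    · simp only [Prod.smul_snd, smul_eq_mul]; field_simp; linarith

theorem collinear_of_det2_sub_eq_zero {A B C : ℝ × ℝ} (h : det2 (B - A) (C - A) = 0) :
    Collinear ℝ ({A, B, C} : Set (ℝ × ℝ)) := by
  rcases eq_or_ne B A with rfl | hBA
  · simpa using collinear_pair ℝ B C
  obtain ⟨r, hr⟩ := exists_eq_smul_of_det2_eq_zero (sub_ne_zero.2 hBA) h
  have hC : C ∈ line[ℝ, A, B] := by
    simpa [← hr] using smul_vsub_vadd_mem_affineSpan_pair r A B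
  rw [Set.pair_comm, Set.insert_comm]
  exact collinear_insert_of_mem_affineSpan_pair hC

theorem GenPos.det2_sub_ne_zero {S : Finset (ℝ × ℝ)} (hgp : GenPos S) {P X Y : ℝ × ℝ}
    (hP : P ∈ S) (hX : X ∈ S) (hY : Y ∈ S) (hPX : P ≠ X) (hPY : P ≠ Y) (hXY : X ≠ Y) :
    det2 (X - P) (Y - P) ≠ 0 := fun h =>
  hgp P hP X hX Y hY hPX hPY hXY (collinear_of_det2_sub_eq_zero h)

theorem GenPos.not_collinear {S : Finset (ℝ × ℝ)} (hgp : GenPos S) (hS : 2 < #S) :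
    ¬ Collinear ℝ (S : Set (ℝ × ℝ)) := by
  obtain ⟨A, hA, B, hB, C, hC, hAB, hAC, hBC⟩ := two_lt_card.1 hS
  exact fun h => hgp A hA B hB C hC hAB hAC hBC <| h.subset <| by
    simp [Set.insert_subset_iff, hA, hB, hC]

theorem exists_forall_dot2_pos_of_mem_extremePoints {S : Finset (ℝ × ℝ)} {P : ℝ × ℝ}
    (hP : P ∈ (convexHull ℝ (S : Set (ℝ × ℝ))).extremePoints ℝ) :
    ∃ v, ∀ X ∈ S.erase P, 0 < dot2 v (X - P) := by
  obtain ⟨f, hf⟩ := exists_forall_lt_of_mem_extremePoints_convexHull S.finite_toSet hP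
  have hf_apply : ∀ Y : ℝ × ℝ, f Y = Y.1 * f (1, 0) + Y.2 * f (0, 1) := fun Y =>
    calc f Y = f (Y.1 • (1, 0) + Y.2 • (0, 1)) := by congr 1; ext <;> simp
      _ = Y.1 * f (1, 0) + Y.2 * f (0, 1) := by
        rw [map_add, map_smul, map_smul, smul_eq_mul, smul_eq_mul]
  refine ⟨(-f (1, 0), -f (0, 1)), fun X hX => ?_⟩
  have hlt := hf X (mem_of_mem_erase hX) (ne_of_mem_erase hX)
  rw [hf_apply X, hf_apply P] at hlt
  simp only [dot2, Prod.fst_sub, Prod.snd_sub]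
  linarith

section Leaf

variable {S : Finset (ℝ × ℝ)} {P v : ℝ × ℝ}

/-- The tangent of the angle from `v` to `X - P`; it increases with that angle on the half-plane
`0 < dot2 v (X - P)`. -/
noncomputable def angularSlope (v P X : ℝ × ℝ) : ℝ := det2 v (X - P) / dot2 v (X - P)

theorem det2_sub_pos_iff_angularSlope_lt (hv : ∀ X ∈ S.erase P, 0 < dot2 v (X - P))
    {Q X : ℝ × ℝ} (hQ : Q ∈ S.erase P) (hX : X ∈ S.erase P) :
    0 < det2 (Q - P) (X - P) ↔ angularSlope v P Q < angularSlope v P X :=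
  det2_pos_iff_div_lt (hv Q hQ) (hv X hX)

theorem injOn_angularSlope (hgp : GenPos S) (hP : P ∈ S)
    (hv : ∀ X ∈ S.erase P, 0 < dot2 v (X - P)) :
    Set.InjOn (angularSlope v P) (S.erase P) := by
  intro X hX Y hY hXY
  by_contra hne
  obtain ⟨hXP, hXS⟩ := mem_erase.1 hX
  obtain ⟨hYP, hYS⟩ := mem_erase.1 hY
  rcases (hgp.det2_sub_ne_zero hP hXS hYS hXP.symm hYP.symm hne).lt_or_gt with h | h
  · rw [← neg_pos, ← det2_swap, det2_sub_pos_iff_angularSlope_lt hv hY hX] at h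
    exact h.ne' hXY
  · exact ((det2_sub_pos_iff_angularSlope_lt hv hX hY).1 h).ne hXY

theorem ncard_setOf_det2_pos (hv : ∀ X ∈ S.erase P, 0 < dot2 v (X - P)) {Q : ℝ × ℝ}
    (hQ : Q ∈ S.erase P) :
    {X ∈ (S : Set (ℝ × ℝ)) | 0 < det2 (Q - P) (X - P)}.ncard =
      #{X ∈ S.erase P | angularSlope v P Q < angularSlope v P X} := by
  rw [ncard_setOf_mem_and_eq_card_filter_erase (a := P) (by simp [det2])]
  exact congrArg card <| filter_congr fun X hX => det2_sub_pos_iff_angularSlope_lt hv hQ hX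

theorem ncard_setOf_det2_neg (hv : ∀ X ∈ S.erase P, 0 < dot2 v (X - P)) {Q : ℝ × ℝ}
    (hQ : Q ∈ S.erase P) :
    {X ∈ (S : Set (ℝ × ℝ)) | det2 (Q - P) (X - P) < 0}.ncard =
      #{X ∈ S.erase P | angularSlope v P X < angularSlope v P Q} := by
  rw [ncard_setOf_mem_and_eq_card_filter_erase (a := P) (by simp [det2])]
  refine congrArg card <| filter_congr fun X hX => ?_
  rw [← neg_pos, ← det2_swap, det2_sub_pos_iff_angularSlope_lt hv hX hQ]

theorem isHalving_iff_card_filter_angularSlope_lt (heven : Even #S) (hgp : GenPos S)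
    (hP : P ∈ S) (hv : ∀ X ∈ S.erase P, 0 < dot2 v (X - P)) {Q : ℝ × ℝ} :
    IsHalving S P Q ↔ Q ∈ S.erase P ∧
      #{X ∈ S.erase P | angularSlope v P X < angularSlope v P Q} = (#S - 2) / 2 := by
  constructor
  · rintro ⟨-, hQS, hPQ, -, hneg⟩
    have hQ : Q ∈ S.erase P := mem_erase.2 ⟨hPQ.symm, hQS⟩
    exact ⟨hQ, (ncard_setOf_det2_neg hv hQ).symm.trans hneg⟩
  · rintro ⟨hQ, hk⟩
    have hsum := card_filter_lt_add_card_filter_gt (injOn_angularSlope hgp hP hv) hQ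
    rw [card_erase_of_mem hP] at hsum
    obtain ⟨r, hr⟩ := heven
    refine ⟨hP, mem_of_mem_erase hQ, (ne_of_mem_erase hQ).symm, ?_, ?_⟩
    · rw [ncard_setOf_det2_pos hv hQ]
      omega
    · rwa [ncard_setOf_det2_neg hv hQ]

theorem hdeg_eq_one_of_forall_dot2_pos (heven : Even #S) (hgp : GenPos S) (hP : P ∈ S)
    (hv : ∀ X ∈ S.erase P, 0 < dot2 v (X - P)) : hdeg S P = 1 := by
  have hk : (#S - 2) / 2 < #(S.erase P) := by
    rw [card_erase_of_mem hP]
    obtain ⟨r, hr⟩ := heven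
    have := card_pos.2 ⟨P, hP⟩
    omega
  obtain ⟨Q, hQ, huniq⟩ := existsUnique_card_filter_lt_eq (injOn_angularSlope hgp hP hv) hk
  rw [hdeg, Set.ncard_eq_one]
  refine ⟨Q, Set.ext fun X => ?_⟩
  rw [Set.mem_ofPred_eq, isHalving_iff_card_filter_angularSlope_lt heven hgp hP hv,
    Set.mem_singleton_iff]
  exact ⟨huniq X, fun h => h ▸ hQ⟩

end Leaf

/-- the underlying graph of `S` has at least three leaves. -/
theorem stmt_2 (S : Finset (ℝ × ℝ)) (heven : Even S.card) (h4 : 4 ≤ S.card)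
    (hgp : GenPos S) :
    ∃ P Q R : ℝ × ℝ, P ∈ S ∧ Q ∈ S ∧ R ∈ S ∧ P ≠ Q ∧ P ≠ R ∧ Q ≠ R ∧
      hdeg S P = 1 ∧ hdeg S Q = 1 ∧ hdeg S R = 1 := by
  have leaf : ∀ X ∈ (convexHull ℝ (S : Set (ℝ × ℝ))).extremePoints ℝ, X ∈ S ∧ hdeg S X = 1 := by
    intro X hX
    have hXS : X ∈ S := extremePoints_convexHull_subset hX
    obtain ⟨v, hv⟩ := exists_forall_dot2_pos_of_mem_extremePoints hX
    exact ⟨hXS, hdeg_eq_one_of_forall_dot2_pos heven hgp hXS hv⟩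
  obtain ⟨P, hP, Q, hQ, R, hR, hPQ, hPR, hQR⟩ :=
    exists_three_mem_extremePoints_convexHull S.finite_toSet (hgp.not_collinear (by omega))
  exact ⟨P, Q, R, (leaf P hP).1, (leaf Q hQ).1, (leaf R hR).1, hPQ, hPR, hQR,
    (leaf P hP).2, (leaf Q hQ).2, (leaf R hR).2⟩
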